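/- Let K and F be Cantor sets in ℝ, each admitting a slow subdivision satisfying the gap condition, and satisfying the pairwise size condition. Fix x ∈ [min K + min F, max K + max F]. Then there exist decreasing sequences of closed intervals (Kᵢ) and (Fᵢ), with Kᵢ an interval of some level of the subdivision of K and Fᵢ of the subdivision of F, whose lengths tend to zero, such that x ∈ Kᵢ + Fᵢ for all i; consequently x = k + f for some k ∈ K, f ∈ F. -/

import Mathlib

open Set

/-- A Cantor set in `ℝ`: a nonempty, compact, perfect, totally disconnected subset. -/
def IsCantorSet (K : Set ℝ) : Prop :=
  K.Nonempty ∧ IsCompact K ∧ Perfect K ∧ IsTotallyDisconnected K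

/-- A hole of a Cantor set `K`: a bounded connected component `(u,v)` of the complement
of `K` inside `[min K, max K]`; its endpoints lie in `K`. -/
def IsHole (K : Set ℝ) (u v : ℝ) : Prop :=
  u < v ∧ u ∈ K ∧ v ∈ K ∧ Set.Ioo u v ∩ K = ∅

/-- A slow subdivision of a Cantor set `K`: a decreasing family `level n` of closed
sets, each a finite disjoint union of closed intervals, starting from
`[min K, max K]`, where at step `n` one connected component `[A n, D n]` of `level n`
is split by removing the open hole `(B n, C n)` (leaving the two nonempty closed
intervals `K^L = [A n, B n]` and `K^R = [C n, D n]`), and with `⋂ n, level n = K`. -/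
structure SlowSubdivision (K : Set ℝ) where
  A : ℕ → ℝ
  B : ℕ → ℝ
  C : ℕ → ℝ
  D : ℕ → ℝ
  hAB : ∀ n, A n ≤ B n
  hBC : ∀ n, B n < C n
  hCD : ∀ n, C n ≤ D n
  level : ℕ → Set ℝ
  level_zero : level 0 = Set.Icc (sInf K) (sSup K)
  /-- `[A n, D n]` is a connected component of `level n`. -/
  comp : ∀ n, Set.Icc (A n) (D n) = connectedComponentIn (level n) (A n)
  level_succ : ∀ n, level (n + 1) = level n \ Set.Ioo (B n) (C n)
  inter_eq : ⋂ n, level n = K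

/-- The gap condition: each removed hole is strictly shorter than both adjacent
remaining closed intervals. -/
def SlowSubdivision.GapCondition {K : Set ℝ} (s : SlowSubdivision K) : Prop :=
  ∀ n, s.C n - s.B n < s.B n - s.A n ∧ s.C n - s.B n < s.D n - s.C n

/-- A slow subdivision is monotone if the removed holes are ordered by
non-increasing length. -/
def SlowSubdivision.IsMonotone {K : Set ℝ} (s : SlowSubdivision K) : Prop :=
  ∀ n, s.C (n + 1) - s.B (n + 1) ≤ s.C n - s.B n

open Filter Topology

/-!
Refine the two subdivisions alternately, one level of `K` and then one level of `F`, keeping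
level intervals `I = [a, d]` of `K` and `J = [p, q]` of `F` with `x ∈ I + J` such that neither
translate is trapped by a hole of the other set: `x - I` lies in no hole of `F` inside `J`, and
`x - J` in no hole of `K` inside `I`. When a hole `(b, c)` splits `I`, the gap conditions of both
sets show that one of `[a, b]`, `[c, d]` keeps this invariant together with `J`. The size
condition gives the invariant for `[min K, max K]` and `[min F, max F]`, and total
disconnectedness shrinks the nested intervals to points `k ∈ K`, `f ∈ F` with `k + f = x`.
-/

theorem Set.OrdConnected.subset_Iic_or_subset_Ici {α : Type*} [LinearOrder α] [DenselyOrdered α]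
    {S : Set α} (hS : S.OrdConnected) {b c : α} (hbc : b < c) (h : Disjoint S (Ioo b c)) :
    S ⊆ Iic b ∨ S ⊆ Ici c := by
  by_contra! hne
  obtain ⟨y, hyS, hby⟩ := not_subset.1 hne.1
  obtain ⟨z, hzS, hzc⟩ := not_subset.1 hne.2
  simp only [mem_Iic, mem_Ici, not_le] at hby hzc
  have hmeet : ∃ w ∈ S, w ∈ Ioo b c := by
    by_cases hyc : y < c
    · exact ⟨y, hyS, hby, hyc⟩
    by_cases hbz : b < z
    · exact ⟨z, hzS, hbz, hzc⟩
    obtain ⟨w, hbw, hwc⟩ := exists_between hbc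
    exact ⟨w, hS.out hzS hyS ⟨(not_lt.1 hbz).trans hbw.le, hwc.le.trans (not_lt.1 hyc)⟩, hbw, hwc⟩
  obtain ⟨w, hwS, hw⟩ := hmeet
  exact disjoint_left.1 h hwS hw

theorem exists_tendsto_of_iInter_Icc_subset {α : Type*} [ConditionallyCompleteLinearOrder α]
    [TopologicalSpace α] [OrderTopology α] [DenselyOrdered α] {M : Set α}
    (hM : IsTotallyDisconnected M) {a d : ℕ → α} (ha : Monotone a) (hd : Antitone d)
    (had : ∀ i, a i ≤ d i) (hsub : ⋂ i, Icc (a i) (d i) ⊆ M) :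
    ∃ k ∈ M, Tendsto a atTop (𝓝 k) ∧ Tendsto d atTop (𝓝 k) := by
  have hle : ∀ i j, a i ≤ d j := ha.forall_le_of_antitone hd had
  have hbdd_a : BddAbove (range a) := ⟨d 0, forall_mem_range.2 fun i => hle i 0⟩
  have hbdd_d : BddBelow (range d) := ⟨a 0, forall_mem_range.2 fun j => hle 0 j⟩
  have hsup_le_inf : ⨆ i, a i ≤ ⨅ j, d j := le_ciInf fun j => ciSup_le fun i => hle i j
  have hIcc : Icc (⨆ i, a i) (⨅ j, d j) ⊆ M := fun y hy =>
    hsub (mem_iInter.2 fun i => ⟨(le_ciSup hbdd_a i).trans hy.1, hy.2.trans (ciInf_le hbdd_d i)⟩)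
  have heq : ⨆ i, a i = ⨅ j, d j := hM _ hIcc isPreconnected_Icc
    (left_mem_Icc.2 hsup_le_inf) (right_mem_Icc.2 hsup_le_inf)
  exact ⟨_, hIcc (left_mem_Icc.2 hsup_le_inf), tendsto_atTop_ciSup ha hbdd_a,
    heq ▸ tendsto_atTop_ciInf hd hbdd_d⟩

theorem exists_seq_of_forall_exists_succ {α : Type*} {P : ℕ → α → Prop} {R : α → α → Prop}
    {x₀ : α} (h₀ : P 0 x₀) (h : ∀ n x, P n x → ∃ y, P (n + 1) y ∧ R x y) :
    ∃ f : ℕ → α, ∀ n, P n (f n) ∧ R (f n) (f (n + 1)) := by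
  have h' : ∀ n x, ∃ y, P n x → P (n + 1) y ∧ R x y := by
    intro n x
    by_cases hx : P n x
    · obtain ⟨y, hy⟩ := h n x hx
      exact ⟨y, fun _ => hy⟩
    · exact ⟨x, fun hx' => absurd hx' hx⟩
  choose g hg using h'
  let f : ℕ → α := fun n => Nat.rec x₀ g n
  have hf : ∀ n, P n (f n) := fun n => by
    induction n with
    | zero => exact h₀
    | succ n ih => exact (hg n (f n) ih).1
  exact ⟨f, fun n => ⟨hf n, (hg n (f n) (hf n)).2⟩⟩

namespace SlowSubdivision

variable {M : Set ℝ} (s : SlowSubdivision M)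

theorem level_antitone : Antitone s.level :=
  antitone_nat_of_succ_le fun n => by rw [s.level_succ]; exact sdiff_subset

theorem subset_level (n : ℕ) : M ⊆ s.level n := fun y hy => by
  rw [← s.inter_eq] at hy
  exact mem_iInter.1 hy n

theorem disjoint_level_succ (n : ℕ) : Disjoint (s.level (n + 1)) (Ioo (s.B n) (s.C n)) := by
  rw [s.level_succ]
  exact disjoint_sdiff_left

theorem disjoint_level_of_lt {j n : ℕ} (h : j < n) : Disjoint (s.level n) (Ioo (s.B j) (s.C j)) :=
  (s.disjoint_level_succ j).mono_left (s.level_antitone h)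

theorem A_le_D (n : ℕ) : s.A n ≤ s.D n :=
  (s.hAB n).trans ((s.hBC n).le.trans (s.hCD n))

theorem hole_subset (n : ℕ) : Ioo (s.B n) (s.C n) ⊆ Icc (s.A n) (s.D n) :=
  Ioo_subset_Icc_self.trans (Icc_subset_Icc (s.hAB n) (s.hCD n))

/-- `[a, d]` is an interval of level `n` of the subdivision. -/
def IsLevelInterval (n : ℕ) (a d : ℝ) : Prop :=
  a ≤ d ∧ Icc a d = connectedComponentIn (s.level n) a

theorem isLevelInterval_comp (n : ℕ) : s.IsLevelInterval n (s.A n) (s.D n) :=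
  ⟨s.A_le_D n, s.comp n⟩

def Traps (p q c e : ℝ) : Prop :=
  ∃ j, p ≤ s.B j ∧ s.C j ≤ q ∧ s.B j < c ∧ e < s.C j

variable {s}

theorem isLevelInterval_of_subset {n : ℕ} {a d : ℝ} (had : a ≤ d) (hsub : Icc a d ⊆ s.level n)
    (hcc : connectedComponentIn (s.level n) a ⊆ Icc a d) : s.IsLevelInterval n a d :=
  ⟨had, (isPreconnected_Icc.subset_connectedComponentIn (left_mem_Icc.2 had) hsub).antisymm hcc⟩

theorem Traps.mono {p q p' q' c e : ℝ} (h : s.Traps p q c e) (hp : p' ≤ p) (hq : q ≤ q') :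
    s.Traps p' q' c e :=
  let ⟨j, hpj, hjq, hc, he⟩ := h
  ⟨j, hp.trans hpj, hjq.trans hq, hc, he⟩

namespace IsLevelInterval

variable {n : ℕ} {a d : ℝ}

theorem eq_connectedComponentIn (h : s.IsLevelInterval n a d) {y : ℝ} (hy : y ∈ Icc a d) :
    Icc a d = connectedComponentIn (s.level n) y := by
  rw [h.2]
  exact connectedComponentIn_eq (h.2 ▸ hy)

theorem subset_level (h : s.IsLevelInterval n a d) : Icc a d ⊆ s.level n :=
  h.2 ▸ connectedComponentIn_subset _ _

theorem subset_of_mem_of_le {m : ℕ} {p q y : ℝ} (h : s.IsLevelInterval n a d)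
    (h' : s.IsLevelInterval m p q) (hmn : m ≤ n) (hy : y ∈ Icc a d) (hy' : y ∈ Icc p q) :
    Icc a d ⊆ Icc p q := by
  rw [h.eq_connectedComponentIn hy, h'.eq_connectedComponentIn hy']
  exact connectedComponentIn_mono _ (s.level_antitone hmn)

theorem succ_of_disjoint (h : s.IsLevelInterval n a d)
    (hdisj : Disjoint (Icc a d) (Ioo (s.B n) (s.C n))) : s.IsLevelInterval (n + 1) a d := by
  refine isLevelInterval_of_subset h.1 ?_ ?_
  · rw [s.level_succ]
    exact subset_sdiff.2 ⟨h.subset_level, hdisj⟩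
  · rw [h.2]
    exact connectedComponentIn_mono _ (s.level_antitone n.le_succ)

theorem eq_of_not_disjoint (h : s.IsLevelInterval n a d)
    (hmeet : ¬ Disjoint (Icc a d) (Ioo (s.B n) (s.C n))) : a = s.A n ∧ d = s.D n := by
  obtain ⟨y, hy, hyBC⟩ := not_disjoint_iff.1 hmeet
  have hcomp := s.isLevelInterval_comp n
  have hyAD := s.hole_subset n hyBC
  exact (Icc_eq_Icc_iff h.1).1 ((h.subset_of_mem_of_le hcomp le_rfl hy hyAD).antisymm
    (hcomp.subset_of_mem_of_le h le_rfl hyAD hy))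

theorem mem_of_not_mem_Ioo (h : s.IsLevelInterval n a d) {y : ℝ} (hy : y ∈ Icc a d)
    (hy' : y ∉ Ioo a d) : y ∈ M := by
  rw [← s.inter_eq, mem_iInter]
  intro k
  induction k with
  | zero => exact s.level_antitone (Nat.zero_le n) (h.subset_level hy)
  | succ k ih =>
    rcases lt_or_ge k n with hkn | hnk
    · exact s.level_antitone hkn (h.subset_level hy)
    rw [s.level_succ]
    refine ⟨ih, fun hyk => hy' ?_⟩
    obtain ⟨haA, hDd⟩ := (Icc_subset_Icc_iff (s.A_le_D k)).1
      ((s.isLevelInterval_comp k).subset_of_mem_of_le h hnk (s.hole_subset k hyk) hy)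
    exact ⟨by linarith [s.hAB k, hyk.1], by linarith [s.hCD k, hyk.2]⟩

theorem hole_gap (hs : s.GapCondition) {m : ℕ} {p q : ℝ} (h : s.IsLevelInterval m p q) {j : ℕ}
    (hp : p ≤ s.B j) (hq : s.C j ≤ q) :
    s.C j - s.B j < s.B j - p ∧ s.C j - s.B j < q - s.C j := by
  have hmj : m ≤ j := by
    by_contra! hjm
    obtain ⟨w, hw⟩ := nonempty_Ioo.2 (s.hBC j)
    exact disjoint_left.1 (s.disjoint_level_of_lt hjm)
      (h.subset_level ⟨hp.trans hw.1.le, hw.2.le.trans hq⟩) hw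
  obtain ⟨hpA, hDq⟩ := (Icc_subset_Icc_iff (s.A_le_D j)).1
    ((s.isLevelInterval_comp j).subset_of_mem_of_le h hmj ⟨s.hAB j, (s.hBC j).le.trans (s.hCD j)⟩
      ⟨hp, (s.hBC j).le.trans hq⟩)
  obtain ⟨hgapL, hgapR⟩ := hs j
  constructor <;> linarith

end IsLevelInterval

variable (s)

theorem isLevelInterval_zero (h : sInf M ≤ sSup M) : s.IsLevelInterval 0 (sInf M) (sSup M) :=
  ⟨h, by rw [s.level_zero, isPreconnected_Icc.connectedComponentIn (left_mem_Icc.2 h)]⟩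

theorem connectedComponentIn_level_succ_subset (n : ℕ) {y : ℝ}
    (hyAD : y ∈ Icc (s.A n) (s.D n)) :
    connectedComponentIn (s.level (n + 1)) y ⊆ Icc (s.A n) (s.B n) ∨
      connectedComponentIn (s.level (n + 1)) y ⊆ Icc (s.C n) (s.D n) := by
  have hAD : connectedComponentIn (s.level (n + 1)) y ⊆ Icc (s.A n) (s.D n) := by
    rw [(s.isLevelInterval_comp n).eq_connectedComponentIn hyAD]
    exact connectedComponentIn_mono _ (s.level_antitone n.le_succ)
  exact (isPreconnected_connectedComponentIn.ordConnected.subset_Iic_or_subset_Ici (s.hBC n)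
    ((s.disjoint_level_succ n).mono_left (connectedComponentIn_subset _ _))).imp
    (fun h z hz => ⟨(hAD hz).1, h hz⟩) (fun h z hz => ⟨h hz, (hAD hz).2⟩)

theorem isLevelInterval_split_left (n : ℕ) : s.IsLevelInterval (n + 1) (s.A n) (s.B n) := by
  have hsub : Icc (s.A n) (s.B n) ⊆ s.level (n + 1) := by
    rw [s.level_succ]
    exact subset_sdiff.2 ⟨(Icc_subset_Icc_right ((s.hBC n).le.trans (s.hCD n))).trans
      (s.comp n ▸ connectedComponentIn_subset _ _), disjoint_left.2 fun y hy hy' => hy'.1.not_ge hy.2⟩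
  have hA := hsub (left_mem_Icc.2 (s.hAB n))
  refine isLevelInterval_of_subset (s.hAB n) hsub ?_
  refine (s.connectedComponentIn_level_succ_subset n ⟨le_rfl, s.A_le_D n⟩).resolve_right ?_
  intro h
  exact ((h (mem_connectedComponentIn hA)).1.trans_lt ((s.hAB n).trans_lt (s.hBC n))).false

theorem isLevelInterval_split_right (n : ℕ) : s.IsLevelInterval (n + 1) (s.C n) (s.D n) := by
  have hsub : Icc (s.C n) (s.D n) ⊆ s.level (n + 1) := by
    rw [s.level_succ]
    exact subset_sdiff.2 ⟨(Icc_subset_Icc_left ((s.hAB n).trans (s.hBC n).le)).trans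
      (s.comp n ▸ connectedComponentIn_subset _ _), disjoint_left.2 fun y hy hy' => hy'.2.not_ge hy.1⟩
  have hC := hsub (left_mem_Icc.2 (s.hCD n))
  refine isLevelInterval_of_subset (s.hCD n) hsub ?_
  refine (s.connectedComponentIn_level_succ_subset n
    ⟨(s.hAB n).trans (s.hBC n).le, s.hCD n⟩).resolve_left ?_
  intro h
  exact ((h (mem_connectedComponentIn hC)).2.trans_lt (s.hBC n)).false

theorem isHole (n : ℕ) : IsHole M (s.B n) (s.C n) :=
  ⟨s.hBC n,
    (s.isLevelInterval_split_left n).mem_of_not_mem_Ioo (right_mem_Icc.2 (s.hAB n))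
      fun h => h.2.false,
    (s.isLevelInterval_split_right n).mem_of_not_mem_Ioo (left_mem_Icc.2 (s.hCD n))
      fun h => h.1.false,
    disjoint_iff_inter_eq_empty.1 ((s.disjoint_level_succ n).symm.mono_right (s.subset_level _))⟩

theorem iInter_Icc_subset {a d : ℕ → ℝ} (h : ∀ i, s.IsLevelInterval i (a i) (d i)) :
    ⋂ i, Icc (a i) (d i) ⊆ M := fun y hy => by
  rw [← s.inter_eq]
  exact mem_iInter.2 fun i => (h i).subset_level (mem_iInter.1 hy i)

theorem D_le_B_or_C_le_A_of_lt {j n : ℕ} (h : j < n) : s.D n ≤ s.B j ∨ s.C j ≤ s.A n :=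
  (ordConnected_Icc.subset_Iic_or_subset_Ici (s.hBC j)
    ((s.disjoint_level_of_lt h).mono_left (s.comp n ▸ connectedComponentIn_subset _ _))).imp
    (fun hI => hI (right_mem_Icc.2 (s.A_le_D n))) (fun hI => hI (left_mem_Icc.2 (s.A_le_D n)))

variable {s}

/-- Of two holes, the one removed later is shorter than the bridge between them. -/
theorem GapCondition.hole_lt_bridge (hs : s.GapCondition) {j j' : ℕ} (h : s.C j < s.C j') :
    s.C j - s.B j < s.B j' - s.C j ∨ s.C j' - s.B j' < s.B j' - s.C j := by
  have hAB := s.hAB j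
  have hBC := s.hBC j
  have hCD' := s.hCD j'
  rcases lt_trichotomy j j' with hlt | rfl | hgt
  · rcases s.D_le_B_or_C_le_A_of_lt hlt with hDB | hCA
    · linarith
    · exact Or.inr (by linarith [(hs j').1])
  · exact absurd h (lt_irrefl _)
  · rcases s.D_le_B_or_C_le_A_of_lt hgt with hDB | hCA
    · exact Or.inl (by linarith [(hs j).2])
    · linarith

theorem GapCondition.exists_half_not_traps (hs : s.GapCondition) {m : ℕ} {p q : ℝ}
    (hJ : s.IsLevelInterval m p q) {a b c d x : ℝ} (hgapL : c - b < b - a) (hgapR : c - b < d - c)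
    (hx : x - q ≤ b ∨ c ≤ x - p) (hI : ¬ s.Traps p q (x - d) (x - a)) :
    (x ≤ b + q ∧ ¬ s.Traps p q (x - b) (x - a)) ∨
      (c + p ≤ x ∧ ¬ s.Traps p q (x - d) (x - c)) := by
  by_cases hL : s.Traps p q (x - b) (x - a)
  · obtain ⟨j', hpj', hj'q, hj'b, hj'a⟩ := hL
    have gap' := hJ.hole_gap hs hpj' hj'q
    refine Or.inr ⟨by linarith [gap'.1], ?_⟩
    rintro ⟨j, hpj, hjq, hjd, hjc⟩
    have hja : s.C j ≤ x - a := not_lt.1 fun hja => hI ⟨j, hpj, hjq, hjd, hja⟩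
    have gap := hJ.hole_gap hs hpj hjq
    rcases hs.hole_lt_bridge (hja.trans_lt hj'a) with h | h <;> linarith
  by_cases hxb : x ≤ b + q
  · exact Or.inl ⟨hxb, hL⟩
  have hcx : c ≤ x - p := hx.resolve_left (by linarith)
  refine Or.inr ⟨by linarith, ?_⟩
  rintro ⟨j, hpj, hjq, hjd, hjc⟩
  have gap := hJ.hole_gap hs hpj hjq
  linarith [gap.2]

end SlowSubdivision

namespace Hall

variable {K F : Set ℝ} {sK : SlowSubdivision K} {sF : SlowSubdivision F} {x : ℝ}

structure Admissible (sK : SlowSubdivision K) (sF : SlowSubdivision F) (x : ℝ) (n m : ℕ)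
    (a d p q : ℝ) : Prop where
  left : sK.IsLevelInterval n a d
  right : sF.IsLevelInterval m p q
  le : a + p ≤ x
  ge : x ≤ d + q
  not_traps_right : ¬ sF.Traps p q (x - d) (x - a)
  not_traps_left : ¬ sK.Traps a d (x - q) (x - p)

variable {n m : ℕ} {a d p q : ℝ}

theorem Admissible.symm (h : Admissible sK sF x n m a d p q) : Admissible sF sK x m n p q a d :=
  ⟨h.right, h.left, by linarith [h.le], by linarith [h.ge], h.not_traps_left, h.not_traps_right⟩

theorem Admissible.exists_succ_left (hsK : sK.GapCondition) (hsF : sF.GapCondition)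
    (h : Admissible sK sF x n m a d p q) :
    ∃ a' d', a ≤ a' ∧ d' ≤ d ∧ Admissible sK sF x (n + 1) m a' d' p q := by
  by_cases hdisj : Disjoint (Icc a d) (Ioo (sK.B n) (sK.C n))
  · exact ⟨a, d, le_rfl, le_rfl, { h with left := h.left.succ_of_disjoint hdisj }⟩
  obtain ⟨rfl, rfl⟩ := h.left.eq_of_not_disjoint hdisj
  have hx : x - q ≤ sK.B n ∨ sK.C n ≤ x - p := by
    by_contra! hx
    exact h.not_traps_left ⟨n, sK.hAB n, sK.hCD n, hx.1, hx.2⟩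
  rcases hsF.exists_half_not_traps h.right (hsK n).1 (hsK n).2 hx h.not_traps_right with
    ⟨hxB, hL⟩ | ⟨hCx, hR⟩
  · exact ⟨_, _, le_rfl, (sK.hBC n).le.trans (sK.hCD n),
      ⟨sK.isLevelInterval_split_left n, h.right, h.le, hxB, hL,
        fun ht => h.not_traps_left (ht.mono le_rfl ((sK.hBC n).le.trans (sK.hCD n)))⟩⟩
  · exact ⟨_, _, (sK.hAB n).trans (sK.hBC n).le, le_rfl,
      ⟨sK.isLevelInterval_split_right n, h.right, hCx, h.ge, hR,
        fun ht => h.not_traps_left (ht.mono ((sK.hAB n).trans (sK.hBC n).le) le_rfl)⟩⟩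

theorem Admissible.exists_succ (hsK : sK.GapCondition) (hsF : sF.GapCondition)
    (h : Admissible sK sF x n n a d p q) :
    ∃ a' d' p' q', (a ≤ a' ∧ d' ≤ d ∧ p ≤ p' ∧ q' ≤ q) ∧
      Admissible sK sF x (n + 1) (n + 1) a' d' p' q' := by
  obtain ⟨a', d', ha, hd, h'⟩ := h.exists_succ_left hsK hsF
  obtain ⟨p', q', hp, hq, h''⟩ := h'.symm.exists_succ_left hsF hsK
  exact ⟨a', d', p', q', ⟨ha, hd, hp, hq⟩, h''.symm⟩

theorem admissible_zero (hK : sInf K ≤ sSup K) (hF : sInf F ≤ sSup F)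
    (hsize1 : ∀ u v : ℝ, IsHole F u v → v - u < sSup K - sInf K)
    (hsize2 : ∀ u v : ℝ, IsHole K u v → v - u < sSup F - sInf F)
    (hx : x ∈ Icc (sInf K + sInf F) (sSup K + sSup F)) :
    Admissible sK sF x 0 0 (sInf K) (sSup K) (sInf F) (sSup F) :=
  ⟨sK.isLevelInterval_zero hK, sF.isLevelInterval_zero hF, hx.1, hx.2,
    fun ⟨j, _, _, hjd, hja⟩ => by linarith [hsize1 _ _ (sF.isHole j)],
    fun ⟨j, _, _, hjq, hjp⟩ => by linarith [hsize2 _ _ (sK.isHole j)]⟩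

theorem Admissible.exists_seq (hsK : sK.GapCondition) (hsF : sF.GapCondition)
    (h : Admissible sK sF x 0 0 a d p q) :
    ∃ a d p q : ℕ → ℝ, Monotone a ∧ Antitone d ∧ Monotone p ∧ Antitone q ∧
      ∀ i, Admissible sK sF x i i (a i) (d i) (p i) (q i) := by
  obtain ⟨t, ht⟩ := exists_seq_of_forall_exists_succ
    (P := fun i (t : (ℝ × ℝ) × (ℝ × ℝ)) => Admissible sK sF x i i t.1.1 t.1.2 t.2.1 t.2.2)
    (R := fun t t' => t.1.1 ≤ t'.1.1 ∧ t'.1.2 ≤ t.1.2 ∧ t.2.1 ≤ t'.2.1 ∧ t'.2.2 ≤ t.2.2)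
    (x₀ := ((a, d), (p, q))) h fun i t ht => by
      obtain ⟨a', d', p', q', hle, h'⟩ := ht.exists_succ hsK hsF
      exact ⟨((a', d'), (p', q')), h', hle⟩
  exact ⟨_, _, _, _, monotone_nat_of_le_succ fun i => (ht i).2.1,
    antitone_nat_of_succ_le fun i => (ht i).2.2.1, monotone_nat_of_le_succ fun i => (ht i).2.2.2.1,
    antitone_nat_of_succ_le fun i => (ht i).2.2.2.2, fun i => (ht i).1⟩

end Hall

open Pointwise Filter

/-- Let `K` and `F` be Cantor sets in `ℝ`, each with a slow
subdivision satisfying the gap condition, and satisfying the pairwise size condition.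
Fix `x ∈ [min K + min F, max K + max F]`. Then there are decreasing sequences of
closed intervals `(Kᵢ) = ([p i, q i])` and `(Fᵢ) = ([p' i, q' i])`, each a connected
component of some level of the respective subdivision, with lengths tending to `0`,
such that `x ∈ Kᵢ + Fᵢ` for all `i`; consequently `x = k + f` with `k ∈ K`, `f ∈ F`. -/
theorem hall_nested_intervals (K F : Set ℝ)
    (hK : IsCantorSet K) (hF : IsCantorSet F)
    (sK : SlowSubdivision K) (hsK : sK.GapCondition)
    (sF : SlowSubdivision F) (hsF : sF.GapCondition)
    (hsize1 : ∀ u v : ℝ, IsHole F u v → v - u < sSup K - sInf K)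
    (hsize2 : ∀ u v : ℝ, IsHole K u v → v - u < sSup F - sInf F)
    (x : ℝ) (hx : x ∈ Set.Icc (sInf K + sInf F) (sSup K + sSup F)) :
    ∃ p q p' q' : ℕ → ℝ,
      (∀ i, p i ≤ q i) ∧ (∀ i, p' i ≤ q' i) ∧
      (∀ i, Set.Icc (p (i + 1)) (q (i + 1)) ⊆ Set.Icc (p i) (q i)) ∧
      (∀ i, Set.Icc (p' (i + 1)) (q' (i + 1)) ⊆ Set.Icc (p' i) (q' i)) ∧
      (∀ i, ∃ n, Set.Icc (p i) (q i) = connectedComponentIn (sK.level n) (p i)) ∧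
      (∀ i, ∃ n, Set.Icc (p' i) (q' i) = connectedComponentIn (sF.level n) (p' i)) ∧
      Tendsto (fun i => q i - p i) atTop (nhds 0) ∧
      Tendsto (fun i => q' i - p' i) atTop (nhds 0) ∧
      (∀ i, x ∈ Set.Icc (p i) (q i) + Set.Icc (p' i) (q' i)) ∧
      ∃ k ∈ K, ∃ f ∈ F, x = k + f := by
  obtain ⟨a, d, p, q, ha, hd, hp, hq, h⟩ :=
    (Hall.admissible_zero (csInf_le_csSup hK.1 hK.2.1.bddBelow hK.2.1.bddAbove)
      (csInf_le_csSup hF.1 hF.2.1.bddBelow hF.2.1.bddAbove) hsize1 hsize2 hx).exists_seq hsK hsF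
  obtain ⟨k, hk, hak, hdk⟩ := exists_tendsto_of_iInter_Icc_subset hK.2.2.2 ha hd
    (fun i => (h i).left.1) (sK.iInter_Icc_subset fun i => (h i).left)
  obtain ⟨f, hf, hpf, hqf⟩ := exists_tendsto_of_iInter_Icc_subset hF.2.2.2 hp hq
    (fun i => (h i).right.1) (sF.iInter_Icc_subset fun i => (h i).right)
  refine ⟨a, d, p, q, fun i => (h i).left.1, fun i => (h i).right.1,
    fun i => Icc_subset_Icc (ha i.le_succ) (hd i.le_succ),
    fun i => Icc_subset_Icc (hp i.le_succ) (hq i.le_succ),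
    fun i => ⟨i, (h i).left.2⟩, fun i => ⟨i, (h i).right.2⟩,
    by simpa using hdk.sub hak, by simpa using hqf.sub hpf, fun i => ?_, k, hk, f, hf, ?_⟩
  · rw [Icc_add_Icc (h i).left.1 (h i).right.1]
    exact ⟨(h i).le, (h i).ge⟩
  · exact le_antisymm (ge_of_tendsto' (hdk.add hqf) fun i => (h i).ge)
      (le_of_tendsto' (hak.add hpf) fun i => (h i).le)
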